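/- arXiv:math/0310042 — 2 statements merged into one kernel-verified Lean document; each statement's English description precedes it below -/
import Mathlib

section
/- Let U_0, …, U_d denote any one of the six decompositions [0D], [0*D*], [0*D], [0*0], [D*0], [D*D] of V. Then for 0 ≤ i ≤ d the actions of A and A* on U_i satisfy: for [0D]: (A − θ_i I)U_i = 0 and A*U_i ⊆ U_{i−1} + U_i + U_{i+1}; for [0*D*]: AU_i ⊆ U_{i−1} + U_i + U_{i+1} and (A* − θ*_i I)U_i = 0; for [0*D]: (A − θ_i I)U_i ⊆ U_{i+1} and (A* − θ*_i I)U_i ⊆ U_{i−1}; for [0*0]: (A − θ_{d−i} I)U_i ⊆ U_{i+1} and (A* − θ*_i I)U_i ⊆ U_{i−1}; for [D*0]: (A − θ_{d−i} I)U_i ⊆ U_{i+1} and (A* − θ*_{d−i} I)U_i ⊆ U_{i−1}; for [D*D]: (A − θ_i I)U_i ⊆ U_{i+1} and (A* − θ*_{d−i} I)U_i ⊆ U_{i−1}. -/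
noncomputable section

open Submodule

variable {K : Type*} [Field K]

/-- `[n]_q = (q^n − q^{−n})/(q − q^{−1})`. -/
def qInt (q : K) (n : ℤ) : K := (q ^ n - q ^ (-n)) / (q - q⁻¹)

/-- Elements `y₀⁺, y₁⁺, y₀⁻, y₁⁻, k₀, k₀⁻¹, k₁, k₁⁻¹` of a unital associative `K`-algebra
satisfy the alternate relations. -/
structure AlternateRelations (q : K) {A : Type*} [Ring A] [Algebra K A]
    (yp ym k kinv : Fin 2 → A) : Prop where
  k_kinv : ∀ i, k i * kinv i = 1
  kinv_k : ∀ i, kinv i * k i = 1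
  central_yp : ∀ i, k 0 * k 1 * yp i = yp i * (k 0 * k 1)
  central_ym : ∀ i, k 0 * k 1 * ym i = ym i * (k 0 * k 1)
  central_k : ∀ i, k 0 * k 1 * k i = k i * (k 0 * k 1)
  central_kinv : ∀ i, k 0 * k 1 * kinv i = kinv i * (k 0 * k 1)
  rel_yp_k : ∀ i, (q - q⁻¹)⁻¹ • (q • (yp i * k i) - q⁻¹ • (k i * yp i)) = 1
  rel_k_ym : ∀ i, (q - q⁻¹)⁻¹ • (q • (k i * ym i) - q⁻¹ • (ym i * k i)) = 1
  rel_ym_yp : ∀ i, (q - q⁻¹)⁻¹ • (q • (ym i * yp i) - q⁻¹ • (yp i * ym i)) = 1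
  rel_yp_ym : ∀ i j, i ≠ j →
    (q - q⁻¹)⁻¹ • (q • (yp i * ym j) - q⁻¹ • (ym j * yp i)) = kinv 0 * kinv 1
  serre_p : ∀ i j, i ≠ j →
    yp i ^ 3 * yp j - qInt q 3 • (yp i ^ 2 * yp j * yp i)
      + qInt q 3 • (yp i * yp j * yp i ^ 2) - yp j * yp i ^ 3 = 0
  serre_m : ∀ i j, i ≠ j →
    ym i ^ 3 * ym j - qInt q 3 • (ym i ^ 2 * ym j * ym i)
      + qInt q 3 • (ym i * ym j * ym i ^ 2) - ym j * ym i ^ 3 = 0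

/-- Elements `e₀⁺, e₁⁺, e₀⁻, e₁⁻, K₀, K₀⁻¹, K₁, K₁⁻¹` of a unital associative `K`-algebra
satisfy the Chevalley relations of `U_q(sl₂ hat)`. -/
structure ChevalleyRelations (q : K) {A : Type*} [Ring A] [Algebra K A]
    (ep em Kg Kginv : Fin 2 → A) : Prop where
  K_Kinv : ∀ i, Kg i * Kginv i = 1
  Kinv_K : ∀ i, Kginv i * Kg i = 1
  K_comm : Kg 0 * Kg 1 = Kg 1 * Kg 0
  KepK_same : ∀ i, Kg i * ep i * Kginv i = (q ^ (2 : ℤ)) • ep i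
  KemK_same : ∀ i, Kg i * em i * Kginv i = (q ^ (-2 : ℤ)) • em i
  KepK_diff : ∀ i j, i ≠ j → Kg i * ep j * Kginv i = (q ^ (-2 : ℤ)) • ep j
  KemK_diff : ∀ i j, i ≠ j → Kg i * em j * Kginv i = (q ^ (2 : ℤ)) • em j
  e_comm_same : ∀ i, ep i * em i - em i * ep i = (q - q⁻¹)⁻¹ • (Kg i - Kginv i)
  e_comm_diff : ∀ i j, i ≠ j → ep i * em j = em j * ep i
  serre_p : ∀ i j, i ≠ j →
    ep i ^ 3 * ep j - qInt q 3 • (ep i ^ 2 * ep j * ep i)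
      + qInt q 3 • (ep i * ep j * ep i ^ 2) - ep j * ep i ^ 3 = 0
  serre_m : ∀ i j, i ≠ j →
    em i ^ 3 * em j - qInt q 3 • (em i ^ 2 * em j * em i)
      + qInt q 3 • (em i * em j * em i ^ 2) - em j * em i ^ 3 = 0

variable {V : Type*} [AddCommGroup V] [Module K V]

/-- A decomposition of `V` of length `d`: nonzero subspaces `U 0, …, U d`
(indexed by `ℤ`, with `U i = ⊥` outside `[0, d]`) whose direct sum is `V`. -/
structure IsDecomposition (d : ℕ) (U : ℤ → Submodule K V) : Prop where
  bot_of_lt : ∀ i : ℤ, i < 0 → U i = ⊥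
  bot_of_gt : ∀ i : ℤ, (d : ℤ) < i → U i = ⊥
  ne_bot : ∀ i : ℤ, 0 ≤ i → i ≤ (d : ℤ) → U i ≠ ⊥
  indep : iSupIndep U
  sup_eq_top : ⨆ i, U i = ⊤

/-- `A, A*` is a tridiagonal pair on `V` with standard orderings `Vs 0, …, Vs d` and
`Vs' 0, …, Vs' d` of the eigenspaces of `A` resp. `A*`, with corresponding eigenvalues
`θ i` resp. `θ' i`. -/
structure IsTridiagonalPair (A A' : Module.End K V) (d : ℕ)
    (Vs Vs' : ℤ → Submodule K V) (θ θ' : ℤ → K) : Prop where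
  decompV : IsDecomposition d Vs
  decompV' : IsDecomposition d Vs'
  eig : ∀ i : ℤ, ∀ v ∈ Vs i, A v = θ i • v
  eig' : ∀ i : ℤ, ∀ v ∈ Vs' i, A' v = θ' i • v
  theta_inj : ∀ i j : ℤ, 0 ≤ i → i ≤ (d : ℤ) → 0 ≤ j → j ≤ (d : ℤ) → θ i = θ j → i = j
  theta'_inj : ∀ i j : ℤ, 0 ≤ i → i ≤ (d : ℤ) → 0 ≤ j → j ≤ (d : ℤ) → θ' i = θ' j → i = j
  trid : ∀ i : ℤ, (Vs i).map A' ≤ Vs (i - 1) ⊔ Vs i ⊔ Vs (i + 1)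
  trid' : ∀ i : ℤ, (Vs' i).map A ≤ Vs' (i - 1) ⊔ Vs' i ⊔ Vs' (i + 1)
  irred : ∀ W : Submodule K V, W.map A ≤ W → W.map A' ≤ W → W = ⊥ ∨ W = ⊤

/-- The sum `U m + U (m+1) + ⋯ + U n`. -/
def sumIcc (U : ℤ → Submodule K V) (m n : ℤ) : Submodule K V :=
  ⨆ j ∈ Set.Icc m n, U j

/-- Decomposition `[0D]`: the `i`-th subspace is `V_i`. -/
def dec0D (Vs : ℤ → Submodule K V) : ℤ → Submodule K V := Vs

/-- Decomposition `[0*D*]`: the `i`-th subspace is `V*_i`. -/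
def dec0sDs (Vs' : ℤ → Submodule K V) : ℤ → Submodule K V := Vs'

/-- Decomposition `[0*D]`: the `i`-th subspace is `(V*_0+⋯+V*_i) ∩ (V_i+⋯+V_d)`. -/
def dec0sD (d : ℕ) (Vs Vs' : ℤ → Submodule K V) (i : ℤ) : Submodule K V :=
  sumIcc Vs' 0 i ⊓ sumIcc Vs i (d : ℤ)

/-- Decomposition `[0*0]`: the `i`-th subspace is `(V*_0+⋯+V*_i) ∩ (V_0+⋯+V_{d−i})`. -/
def dec0s0 (d : ℕ) (Vs Vs' : ℤ → Submodule K V) (i : ℤ) : Submodule K V :=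
  sumIcc Vs' 0 i ⊓ sumIcc Vs 0 ((d : ℤ) - i)

/-- Decomposition `[D*0]`: the `i`-th subspace is `(V*_{d−i}+⋯+V*_d) ∩ (V_0+⋯+V_{d−i})`. -/
def decDs0 (d : ℕ) (Vs Vs' : ℤ → Submodule K V) (i : ℤ) : Submodule K V :=
  sumIcc Vs' ((d : ℤ) - i) (d : ℤ) ⊓ sumIcc Vs 0 ((d : ℤ) - i)

/-- Decomposition `[D*D]`: the `i`-th subspace is `(V*_{d−i}+⋯+V*_d) ∩ (V_i+⋯+V_d)`. -/
def decDsD (d : ℕ) (Vs Vs' : ℤ → Submodule K V) (i : ℤ) : Submodule K V :=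
  sumIcc Vs' ((d : ℤ) - i) (d : ℤ) ⊓ sumIcc Vs i (d : ℤ)

section AuxStmt4

variable {K : Type*} [Field K] {V : Type*} [AddCommGroup V] [Module K V]

lemma le_sumIcc (U : ℤ → Submodule K V) {m n j : ℤ} (h1 : m ≤ j) (h2 : j ≤ n) :
    U j ≤ sumIcc U m n := le_iSup₂_of_le j ⟨h1, h2⟩ le_rfl

lemma sub_smul_apply (B : Module.End K V) (c : K) (v : V) :
    (B - c • 1) v = B v - c • v := rfl

lemma eigLow (B : Module.End K V) (μ : ℤ → K) (U : ℤ → Submodule K V)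
    (heig : ∀ j : ℤ, ∀ v ∈ U j, B v = μ j • v) (m n : ℤ) :
    Submodule.map (B - μ n • 1) (sumIcc U m n) ≤ sumIcc U m (n - 1) := by
  rw [Submodule.map_le_iff_le_comap]
  refine iSup₂_le fun j hj v hv => ?_
  have h : (B - μ n • 1) v = (μ j - μ n) • v := by
    rw [sub_smul_apply, heig j v hv, sub_smul]
  rw [Submodule.mem_comap, h]
  rcases eq_or_lt_of_le hj.2 with h' | h'
  · subst h'; simp
  · exact le_sumIcc U hj.1 (by omega) (Submodule.smul_mem _ _ hv)

lemma eigHigh (B : Module.End K V) (μ : ℤ → K) (U : ℤ → Submodule K V)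
    (heig : ∀ j : ℤ, ∀ v ∈ U j, B v = μ j • v) (m n : ℤ) :
    Submodule.map (B - μ m • 1) (sumIcc U m n) ≤ sumIcc U (m + 1) n := by
  rw [Submodule.map_le_iff_le_comap]
  refine iSup₂_le fun j hj v hv => ?_
  have h : (B - μ m • 1) v = (μ j - μ m) • v := by
    rw [sub_smul_apply, heig j v hv, sub_smul]
  rw [Submodule.mem_comap, h]
  rcases eq_or_lt_of_le hj.1 with h' | h'
  · rw [← h']; simp
  · exact le_sumIcc U (by omega) hj.2 (Submodule.smul_mem _ _ hv)

lemma tridLow (B : Module.End K V) (U : ℤ → Submodule K V) {d : ℕ}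
    (hbot : ∀ i : ℤ, (d : ℤ) < i → U i = ⊥)
    (htrid : ∀ j : ℤ, (U j).map B ≤ U (j - 1) ⊔ U j ⊔ U (j + 1))
    (c : K) (m n : ℤ) (hn : (d : ℤ) ≤ n) :
    Submodule.map (B - c • 1) (sumIcc U m n) ≤ sumIcc U (m - 1) n := by
  rw [Submodule.map_le_iff_le_comap]
  refine iSup₂_le fun j hj v hv => ?_
  obtain ⟨hj1, hj2⟩ := hj
  rw [Submodule.mem_comap, sub_smul_apply]
  have hle : U (j - 1) ⊔ U j ⊔ U (j + 1) ≤ sumIcc U (m - 1) n := by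
    refine sup_le (sup_le (le_sumIcc U (by omega) (by omega))
      (le_sumIcc U (by omega) hj2)) ?_
    rcases le_or_gt (j + 1) n with h | h
    · exact le_sumIcc U (by omega) h
    · rw [hbot (j + 1) (by omega)]; exact bot_le
  exact Submodule.sub_mem _ (hle (htrid j (Submodule.mem_map_of_mem hv)))
    (Submodule.smul_mem _ _ (le_sumIcc U (by omega) hj2 hv))

lemma tridHigh (B : Module.End K V) (U : ℤ → Submodule K V)
    (hbot : ∀ i : ℤ, i < 0 → U i = ⊥)
    (htrid : ∀ j : ℤ, (U j).map B ≤ U (j - 1) ⊔ U j ⊔ U (j + 1))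
    (c : K) (m n : ℤ) (hm : m ≤ 0) :
    Submodule.map (B - c • 1) (sumIcc U m n) ≤ sumIcc U m (n + 1) := by
  rw [Submodule.map_le_iff_le_comap]
  refine iSup₂_le fun j hj v hv => ?_
  obtain ⟨hj1, hj2⟩ := hj
  rw [Submodule.mem_comap, sub_smul_apply]
  have hle : U (j - 1) ⊔ U j ⊔ U (j + 1) ≤ sumIcc U m (n + 1) := by
    refine sup_le (sup_le ?_ (le_sumIcc U hj1 (by omega)))
      (le_sumIcc U (by omega) (by omega))
    rcases le_or_gt m (j - 1) with h | h
    · exact le_sumIcc U h (by omega)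
    · rw [hbot (j - 1) (by omega)]; exact bot_le
  exact Submodule.sub_mem _ (hle (htrid j (Submodule.mem_map_of_mem hv)))
    (Submodule.smul_mem _ _ (le_sumIcc U hj1 (by omega) hv))

lemma map_inf_le' (B : Module.End K V) {p q r s : Submodule K V}
    (h1 : Submodule.map B p ≤ r) (h2 : Submodule.map B q ≤ s) :
    Submodule.map B (p ⊓ q) ≤ r ⊓ s :=
  le_inf ((Submodule.map_mono inf_le_left).trans h1)
    ((Submodule.map_mono inf_le_right).trans h2)

end AuxStmt4

/-- the actions of `A` and `A*` on the six decompositions. -/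
theorem stmt4 {K : Type*} [Field K] [IsAlgClosed K]
    {V : Type*} [AddCommGroup V] [Module K V] [FiniteDimensional K V] [Nontrivial V]
    (q : K) (hq0 : q ≠ 0) (hq : ∀ n : ℕ, 0 < n → q ^ n ≠ 1)
    (A A' : Module.End K V) (d : ℕ) (Vs Vs' : ℤ → Submodule K V) (θ θ' : ℤ → K)
    (hTD : IsTridiagonalPair A A' d Vs Vs' θ θ') :
    ∀ i : ℤ, 0 ≤ i → i ≤ (d : ℤ) →
      -- [0D]
      (Submodule.map (A - θ i • 1) (dec0D Vs i) = ⊥ ∧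
        Submodule.map A' (dec0D Vs i) ≤ dec0D Vs (i - 1) ⊔ dec0D Vs i ⊔ dec0D Vs (i + 1)) ∧
      -- [0*D*]
      (Submodule.map A (dec0sDs Vs' i) ≤
          dec0sDs Vs' (i - 1) ⊔ dec0sDs Vs' i ⊔ dec0sDs Vs' (i + 1) ∧
        Submodule.map (A' - θ' i • 1) (dec0sDs Vs' i) = ⊥) ∧
      -- [0*D]
      (Submodule.map (A - θ i • 1) (dec0sD d Vs Vs' i) ≤ dec0sD d Vs Vs' (i + 1) ∧
        Submodule.map (A' - θ' i • 1) (dec0sD d Vs Vs' i) ≤ dec0sD d Vs Vs' (i - 1)) ∧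
      -- [0*0]
      (Submodule.map (A - θ ((d : ℤ) - i) • 1) (dec0s0 d Vs Vs' i) ≤ dec0s0 d Vs Vs' (i + 1) ∧
        Submodule.map (A' - θ' i • 1) (dec0s0 d Vs Vs' i) ≤ dec0s0 d Vs Vs' (i - 1)) ∧
      -- [D*0]
      (Submodule.map (A - θ ((d : ℤ) - i) • 1) (decDs0 d Vs Vs' i) ≤ decDs0 d Vs Vs' (i + 1) ∧
        Submodule.map (A' - θ' ((d : ℤ) - i) • 1) (decDs0 d Vs Vs' i) ≤ decDs0 d Vs Vs' (i - 1)) ∧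
      -- [D*D]
      (Submodule.map (A - θ i • 1) (decDsD d Vs Vs' i) ≤ decDsD d Vs Vs' (i + 1) ∧
        Submodule.map (A' - θ' ((d : ℤ) - i) • 1) (decDsD d Vs Vs' i) ≤ decDsD d Vs Vs' (i - 1)) := by
  intro i hi0 hid
  have hbotV := hTD.decompV.bot_of_gt
  have hbotV0 := hTD.decompV.bot_of_lt
  have hbotV' := hTD.decompV'.bot_of_gt
  have hbotV'0 := hTD.decompV'.bot_of_lt
  refine ⟨⟨?_, hTD.trid i⟩, ⟨hTD.trid' i, ?_⟩, ⟨?_, ?_⟩, ⟨?_, ?_⟩, ⟨?_, ?_⟩, ⟨?_, ?_⟩⟩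
  · -- [0D].1
    rw [Submodule.eq_bot_iff]
    rintro x ⟨v, hv, rfl⟩
    rw [sub_smul_apply, hTD.eig i v hv, sub_self]
  · -- [0*D*].2
    rw [Submodule.eq_bot_iff]
    rintro x ⟨v, hv, rfl⟩
    rw [sub_smul_apply, hTD.eig' i v hv, sub_self]
  · -- [0*D].1
    exact map_inf_le' _ (tridHigh A Vs' hbotV'0 hTD.trid' _ 0 i le_rfl)
      (eigHigh A θ Vs hTD.eig i (d : ℤ))
  · -- [0*D].2
    exact map_inf_le' _ (eigLow A' θ' Vs' hTD.eig' 0 i)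
      (tridLow A' Vs hbotV hTD.trid _ i (d : ℤ) le_rfl)
  · -- [0*0].1
    show Submodule.map _ _ ≤ sumIcc Vs' 0 (i + 1) ⊓ sumIcc Vs 0 ((d : ℤ) - (i + 1))
    rw [show (d : ℤ) - (i + 1) = (d : ℤ) - i - 1 from by ring]
    exact map_inf_le' _ (tridHigh A Vs' hbotV'0 hTD.trid' _ 0 i le_rfl)
      (eigLow A θ Vs hTD.eig 0 ((d : ℤ) - i))
  · -- [0*0].2
    show Submodule.map _ _ ≤ sumIcc Vs' 0 (i - 1) ⊓ sumIcc Vs 0 ((d : ℤ) - (i - 1))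
    rw [show (d : ℤ) - (i - 1) = (d : ℤ) - i + 1 from by ring]
    exact map_inf_le' _ (eigLow A' θ' Vs' hTD.eig' 0 i)
      (tridHigh A' Vs hbotV0 hTD.trid _ 0 ((d : ℤ) - i) le_rfl)
  · -- [D*0].1
    show Submodule.map _ _ ≤
      sumIcc Vs' ((d : ℤ) - (i + 1)) (d : ℤ) ⊓ sumIcc Vs 0 ((d : ℤ) - (i + 1))
    rw [show (d : ℤ) - (i + 1) = (d : ℤ) - i - 1 from by ring]
    exact map_inf_le' _ (tridLow A Vs' hbotV' hTD.trid' _ ((d : ℤ) - i) (d : ℤ) le_rfl)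
      (eigLow A θ Vs hTD.eig 0 ((d : ℤ) - i))
  · -- [D*0].2
    show Submodule.map _ _ ≤
      sumIcc Vs' ((d : ℤ) - (i - 1)) (d : ℤ) ⊓ sumIcc Vs 0 ((d : ℤ) - (i - 1))
    rw [show (d : ℤ) - (i - 1) = (d : ℤ) - i + 1 from by ring]
    exact map_inf_le' _ (eigHigh A' θ' Vs' hTD.eig' ((d : ℤ) - i) (d : ℤ))
      (tridHigh A' Vs hbotV0 hTD.trid _ 0 ((d : ℤ) - i) le_rfl)
  · -- [D*D].1
    show Submodule.map _ _ ≤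
      sumIcc Vs' ((d : ℤ) - (i + 1)) (d : ℤ) ⊓ sumIcc Vs (i + 1) (d : ℤ)
    rw [show (d : ℤ) - (i + 1) = (d : ℤ) - i - 1 from by ring]
    exact map_inf_le' _ (tridLow A Vs' hbotV' hTD.trid' _ ((d : ℤ) - i) (d : ℤ) le_rfl)
      (eigHigh A θ Vs hTD.eig i (d : ℤ))
  · -- [D*D].2
    show Submodule.map _ _ ≤
      sumIcc Vs' ((d : ℤ) - (i - 1)) (d : ℤ) ⊓ sumIcc Vs (i - 1) (d : ℤ)
    rw [show (d : ℤ) - (i - 1) = (d : ℤ) - i + 1 from by ring]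
    exact map_inf_le' _ (eigHigh A' θ' Vs' hTD.eig' ((d : ℤ) - i) (d : ℤ))
      (tridLow A' Vs hbotV hTD.trid _ i (d : ℤ) le_rfl)
end
end

section
/- The following four identities hold in End(V): (qAB − q^{−1}BA)/(q − q^{−1}) = ab·I, (qBA* − q^{−1}A*B)/(q − q^{−1}) = a*b·I, (qA*B* − q^{−1}B*A*)/(q − q^{−1}) = a*b*·I, and (qB*A − q^{−1}AB*)/(q − q^{−1}) = ab*·I. -/
/-
On `W i = (V*_0 + ⋯ + V*_i) ∩ (V_0 + ⋯ + V_{d-i})` the map `B` is the scalar `b q^{2i-d}`.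
The tridiagonal conditions give `(A - θ_{d-i}) W i ⊆ W (i+1)` and `(A* - θ*_i) W i ⊆ W (i-1)`,
so by irreducibility the `W i` span `V`. Writing `A v = θ_{d-i} v + u` with `u ∈ W (i+1)`, the
`q`-commutator of `A` and `B` sends `v` to `b q^{2i-d} θ_{d-i} v = ab v`: the `u`-terms cancel since
`B` scales `W (i+1)` by `q²` times its scalar on `W i`. The same computation with `A*` lowering
gives the second relation. Reversing both standard orderings turns the decomposition `[D*D]` into
`[0*0]` and replaces `q` by `q⁻¹`, which yields the two relations for `B*`.
-/
noncomputable section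

open Submodule

variable {K : Type*} [Field K]

variable {V : Type*} [AddCommGroup V] [Module K V]

section Flags

variable {U : ℤ → Submodule K V} {m n : ℤ}

lemma le_sumIcc_s5 {j : ℤ} (hm : m ≤ j) (hn : j ≤ n) : U j ≤ sumIcc U m n :=
  le_iSup₂_of_le j ⟨hm, hn⟩ le_rfl

lemma sumIcc_le {T : Submodule K V} (h : ∀ j, m ≤ j → j ≤ n → U j ≤ T) : sumIcc U m n ≤ T :=
  iSup₂_le fun j hj => h j hj.1 hj.2

lemma sumIcc_mono {m' n' : ℤ} (hm : m' ≤ m) (hn : n ≤ n') : sumIcc U m n ≤ sumIcc U m' n' :=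
  sumIcc_le fun _ hj₁ hj₂ => le_sumIcc_s5 (hm.trans hj₁) (hj₂.trans hn)

lemma sumIcc_eq_bot_of_lt (h : n < m) : sumIcc U m n = ⊥ :=
  eq_bot_iff.2 <| sumIcc_le fun _ hj₁ hj₂ => absurd (hj₁.trans hj₂) h.not_ge

lemma sumIcc_self (j : ℤ) : sumIcc U j j = U j :=
  le_antisymm (sumIcc_le fun k h₁ h₂ => by rw [le_antisymm h₂ h₁]) (le_sumIcc_s5 le_rfl le_rfl)

lemma sumIcc_sub_one_left (h : U (m - 1) = ⊥) : sumIcc U (m - 1) n = sumIcc U m n := by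
  refine le_antisymm (sumIcc_le fun j hj₁ hj₂ => ?_) (sumIcc_mono (by omega) le_rfl)
  rcases hj₁.eq_or_lt with rfl | hj₁
  · simp [h]
  · exact le_sumIcc_s5 (by omega) hj₂

lemma sumIcc_comp_sub (k : ℤ) : sumIcc (fun j => U (k - j)) m n = sumIcc U (k - n) (k - m) := by
  refine le_antisymm (sumIcc_le fun j hj₁ hj₂ => le_sumIcc_s5 (by omega) (by omega))
    (sumIcc_le fun j hj₁ hj₂ => ?_)
  simpa using le_sumIcc_s5 (U := fun j => U (k - j)) (j := k - j) (by omega) (by omega)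

lemma sub_smul_mem_sumIcc_sub_one {E : Module.End K V} {θ : ℤ → K}
    (heig : ∀ i, ∀ v ∈ U i, E v = θ i • v) {v : V} (hv : v ∈ sumIcc U m n) :
    E v - θ n • v ∈ sumIcc U m (n - 1) := by
  refine sumIcc_le (T := (sumIcc U m (n - 1)).comap (E - θ n • 1)) (fun j hj₁ hj₂ w hw => ?_) hv
  have hEw : (E - θ n • 1) w = (θ j - θ n) • w := by simp [heig j w hw, sub_smul]
  rw [Submodule.mem_comap, hEw]
  rcases hj₂.eq_or_lt with rfl | hj₂
  · simp
  · exact le_sumIcc_s5 hj₁ (by omega) (Submodule.smul_mem _ _ hw)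

lemma map_sumIcc_le_of_tridiagonal {L : Module.End K V}
    (htrid : ∀ i, (U i).map L ≤ U (i - 1) ⊔ U i ⊔ U (i + 1)) :
    (sumIcc U m n).map L ≤ sumIcc U (m - 1) (n + 1) :=
  Submodule.map_le_iff_le_comap.2 <| sumIcc_le fun j hj₁ hj₂ =>
    Submodule.map_le_iff_le_comap.1 <| (htrid j).trans <|
      sup_le (sup_le (le_sumIcc_s5 (by omega) (by omega)) (le_sumIcc_s5 (by omega) (by omega)))
        (le_sumIcc_s5 (by omega) (by omega))

lemma sub_smul_mem_sumIcc_zero_add_one {L : Module.End K V}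
    (htrid : ∀ i, (U i).map L ≤ U (i - 1) ⊔ U i ⊔ U (i + 1)) (hbot : U (-1) = ⊥)
    {v : V} (hv : v ∈ sumIcc U 0 n) (c : K) : L v - c • v ∈ sumIcc U 0 (n + 1) := by
  have hLv := map_sumIcc_le_of_tridiagonal htrid (Submodule.mem_map_of_mem hv)
  rw [zero_sub, ← zero_sub, sumIcc_sub_one_left (by simpa using hbot)] at hLv
  exact sub_mem hLv (Submodule.smul_mem _ _ (sumIcc_mono le_rfl (by omega) hv))

end Flags

namespace IsDecomposition

variable {d : ℕ} {U : ℤ → Submodule K V}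

lemma sumIcc_eq_top (hU : IsDecomposition d U) : sumIcc U 0 d = ⊤ := by
  refine eq_top_iff.2 <| hU.sup_eq_top ▸ iSup_le fun j => ?_
  by_cases hj : 0 ≤ j ∧ j ≤ (d : ℤ)
  · exact le_sumIcc_s5 hj.1 hj.2
  · rcases not_and_or.1 hj with hj | hj
    · simp [hU.bot_of_lt j (by omega)]
    · simp [hU.bot_of_gt j (by omega)]

lemma comp_sub (hU : IsDecomposition d U) : IsDecomposition d fun i => U (d - i) where
  bot_of_lt i hi := hU.bot_of_gt _ (by omega)
  bot_of_gt i hi := hU.bot_of_lt _ (by omega)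
  ne_bot i hi₀ hid := hU.ne_bot _ (by omega) (by omega)
  indep := hU.indep.comp fun i j h => by simpa using h
  sup_eq_top := ((Equiv.subLeft (d : ℤ)).surjective.iSup_comp U).trans hU.sup_eq_top

end IsDecomposition

namespace IsTridiagonalPair

variable {A A' : Module.End K V} {d : ℕ} {Vs Vs' : ℤ → Submodule K V} {θ θ' : ℤ → K}

lemma reverse (hTD : IsTridiagonalPair A A' d Vs Vs' θ θ') :
    IsTridiagonalPair A A' d (fun i => Vs (d - i)) (fun i => Vs' (d - i))
      (fun i => θ (d - i)) (fun i => θ' (d - i)) where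
  decompV := hTD.decompV.comp_sub
  decompV' := hTD.decompV'.comp_sub
  eig i := hTD.eig (d - i)
  eig' i := hTD.eig' (d - i)
  theta_inj i j hi₀ hid hj₀ hjd h := by
    have := hTD.theta_inj _ _ (by omega) (by omega) (by omega) (by omega) h
    omega
  theta'_inj i j hi₀ hid hj₀ hjd h := by
    have := hTD.theta'_inj _ _ (by omega) (by omega) (by omega) (by omega) h
    omega
  trid i := by
    rw [← sub_add, ← sub_sub]
    exact (hTD.trid (d - i)).trans_eq (by ac_rfl)
  trid' i := by
    rw [← sub_add, ← sub_sub]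
    exact (hTD.trid' (d - i)).trans_eq (by ac_rfl)
  irred := hTD.irred

end IsTridiagonalPair

def ActsAsShift {ι : Type*} (X : Module.End K V) (W : ι → Submodule K V) (next : ι → ι)
    (c : ι → K) : Prop :=
  ∀ i, ∀ v ∈ W i, X v - c i • v ∈ W (next i)

lemma forall_mem_of_eq_bot_outside {W : ℤ → Submodule K V} {m n : ℤ}
    (hW : ∀ i, i < m ∨ n < i → W i = ⊥) {P : ℤ → V → Prop} (hP : ∀ i, P i 0)
    (h : ∀ i, m ≤ i → i ≤ n → ∀ v ∈ W i, P i v) : ∀ i, ∀ v ∈ W i, P i v := by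
  intro i v hv
  by_cases hi : m ≤ i ∧ i ≤ n
  · exact h i hi.1 hi.2 v hv
  · rw [hW i (by omega), Submodule.mem_bot] at hv
    exact hv ▸ hP i

namespace ActsAsShift

variable {ι : Type*} {X : Module.End K V} {W : ι → Submodule K V} {next : ι → ι} {c : ι → K}

lemma map_iSup_le (hX : ActsAsShift X W next c) : (⨆ i, W i).map X ≤ ⨆ i, W i := by
  refine (Submodule.map_iSup _ _).trans_le <| iSup_le fun i =>
    Submodule.map_le_iff_le_comap.2 fun v hv => ?_
  rw [Submodule.mem_comap, ← sub_add_cancel (X v) (c i • v)]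
  exact add_mem (le_iSup W (next i) (hX i v hv)) (le_iSup W i (Submodule.smul_mem _ _ hv))

lemma congr_of_eq_bot_outside {W : ℤ → Submodule K V} {next : ℤ → ℤ} {c c' : ℤ → K} {m n : ℤ}
    (hX : ActsAsShift X W next c) (hW : ∀ i, i < m ∨ n < i → W i = ⊥)
    (hc : ∀ i, m ≤ i → i ≤ n → c i = c' i) : ActsAsShift X W next c' :=
  forall_mem_of_eq_bot_outside hW (fun i => by simp)
    fun i hi₀ hin v hv => hc i hi₀ hin ▸ hX i v hv

end ActsAsShift

lemma eq_smul_one_of_iSup_eq_top {ι : Type*} {W : ι → Submodule K V} (hW : ⨆ i, W i = ⊤)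
    {L : Module.End K V} {r : K} (h : ∀ i, ∀ v ∈ W i, L v = r • v) : L = r • 1 :=
  sub_eq_zero.1 <| LinearMap.ker_eq_top.1 <| eq_top_iff.2 <|
    hW ▸ iSup_le fun i v hv => by simp [h i v hv]

def qComm (q : K) (X Y : Module.End K V) : Module.End K V :=
  (q - q⁻¹)⁻¹ • (q • (X * Y) - q⁻¹ • (Y * X))

lemma qComm_inv (q : K) (X Y : Module.End K V) : qComm q⁻¹ X Y = qComm q Y X := by
  unfold qComm
  rw [inv_inv, ← neg_sub, inv_neg]
  module

lemma inv_sub_inv_inv_ne_zero {q : K} (hq : q - q⁻¹ ≠ 0) : q⁻¹ - q⁻¹⁻¹ ≠ 0 := by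
  rwa [inv_inv, ← neg_sub, neg_ne_zero]

lemma sub_inv_ne_zero_of_pow_ne_one {q : K} (hq0 : q ≠ 0) (hq : ∀ n : ℕ, 0 < n → q ^ n ≠ 1) :
    q - q⁻¹ ≠ 0 := by
  refine sub_ne_zero.2 fun h => hq 2 two_pos ?_
  rw [sq]
  nth_rw 2 [h]
  exact mul_inv_cancel₀ hq0

theorem qComm_eq_smul_one_of_actsAsShift {ι : Type*} {W : ι → Submodule K V} {next : ι → ι}
    {c β : ι → K} {q r : K} {X Y : Module.End K V} (hq : q - q⁻¹ ≠ 0) (hW : ⨆ i, W i = ⊤)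
    (hX : ActsAsShift X W next c) (hY : ∀ i, ∀ v ∈ W i, Y v = β i • v)
    (hβ : ∀ i, β (next i) = q ^ 2 * β i) (hr : ∀ i, β i * c i = r) : qComm q X Y = r • 1 := by
  have hq0 : q ≠ 0 := by rintro rfl; simp at hq
  refine eq_smul_one_of_iSup_eq_top hW fun i v hv => ?_
  obtain ⟨u, hu, hXv⟩ : ∃ u ∈ W (next i), X v = c i • v + u := ⟨_, hX i v hv, by abel⟩
  simp only [qComm, LinearMap.smul_apply, LinearMap.sub_apply, Module.End.mul_apply, hXv,
    hY i v hv, map_add, map_smul, hY _ u hu, hβ, ← hr i]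
  match_scalars
  · rw [inv_mul_eq_iff_eq_mul₀ hq]
    ring
  · rw [inv_mul_eq_iff_eq_mul₀ hq]
    field_simp
    ring

section Dec0s0

variable {A A' : Module.End K V} {d : ℕ} {Vs Vs' : ℤ → Submodule K V} {θ θ' : ℤ → K}

lemma dec0s0_eq_bot {i : ℤ} (hi : i < 0 ∨ (d : ℤ) < i) : dec0s0 d Vs Vs' i = ⊥ := by
  rcases hi with hi | hi
  · simp [dec0s0, sumIcc_eq_bot_of_lt hi]
  · simp [dec0s0, sumIcc_eq_bot_of_lt (show (d : ℤ) - i < 0 by omega)]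

lemma decDsD_eq_dec0s0 :
    decDsD d Vs Vs' = dec0s0 d (fun j => Vs (d - j)) (fun j => Vs' (d - j)) := by
  ext1 i
  simp [dec0s0, decDsD, sumIcc_comp_sub]

namespace IsTridiagonalPair

variable (hTD : IsTridiagonalPair A A' d Vs Vs' θ θ')
include hTD

lemma actsAsShift_dec0s0_left :
    ActsAsShift A (dec0s0 d Vs Vs') (· + 1) fun i => θ (d - i) := by
  intro i v hv
  obtain ⟨hv', hv⟩ := Submodule.mem_inf.1 hv
  refine Submodule.mem_inf.2 ⟨sub_smul_mem_sumIcc_zero_add_one hTD.trid'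
    (hTD.decompV'.bot_of_lt _ (by norm_num)) hv' _, ?_⟩
  rw [← sub_sub]
  exact sub_smul_mem_sumIcc_sub_one hTD.eig hv

lemma actsAsShift_dec0s0_right : ActsAsShift A' (dec0s0 d Vs Vs') (· - 1) θ' := by
  intro i v hv
  obtain ⟨hv', hv⟩ := Submodule.mem_inf.1 hv
  refine Submodule.mem_inf.2 ⟨sub_smul_mem_sumIcc_sub_one hTD.eig' hv', ?_⟩
  rw [← sub_add]
  exact sub_smul_mem_sumIcc_zero_add_one hTD.trid (hTD.decompV.bot_of_lt _ (by norm_num)) hv _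

lemma iSup_dec0s0_eq_top : ⨆ i, dec0s0 d Vs Vs' i = ⊤ := by
  have h₀ : dec0s0 d Vs Vs' 0 = Vs' 0 := by
    simp [dec0s0, sumIcc_self, hTD.decompV.sumIcc_eq_top]
  refine (hTD.irred _ hTD.actsAsShift_dec0s0_left.map_iSup_le
    hTD.actsAsShift_dec0s0_right.map_iSup_le).resolve_left fun h => ?_
  refine hTD.decompV'.ne_bot 0 le_rfl (by omega) (eq_bot_iff.2 ?_)
  exact h₀ ▸ h ▸ le_iSup (dec0s0 d Vs Vs') 0

theorem qComm_eq_smul_one_of_dec0s0 {q a a' b : K} (hq : q - q⁻¹ ≠ 0)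
    (hθ : ∀ i : ℤ, 0 ≤ i → i ≤ (d : ℤ) → θ i = a * q ^ (2 * i - (d : ℤ)))
    (hθ' : ∀ i : ℤ, 0 ≤ i → i ≤ (d : ℤ) → θ' i = a' * q ^ ((d : ℤ) - 2 * i))
    {B : Module.End K V}
    (hB : ∀ i : ℤ, 0 ≤ i → i ≤ (d : ℤ) → ∀ v ∈ dec0s0 d Vs Vs' i,
      B v = (b * q ^ (2 * i - (d : ℤ))) • v) :
    qComm q A B = (a * b) • 1 ∧ qComm q B A' = (a' * b) • 1 := by
  have hq0 : q ≠ 0 := by rintro rfl; simp at hq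
  have hbot : ∀ i, i < 0 ∨ (d : ℤ) < i → dec0s0 d Vs Vs' i = ⊥ := fun i => dec0s0_eq_bot
  have hB : ∀ i, ∀ v ∈ dec0s0 d Vs Vs' i, B v = (b * q ^ (2 * i - (d : ℤ))) • v :=
    forall_mem_of_eq_bot_outside hbot (fun i => by simp) hB
  have hr (c : K) (i : ℤ) : b * q ^ (2 * i - d) * (c * q ^ ((d : ℤ) - 2 * i)) = c * b := by
    rw [mul_mul_mul_comm, ← zpow_add₀ hq0]
    simp [mul_comm]
  constructor
  · refine qComm_eq_smul_one_of_actsAsShift hq hTD.iSup_dec0s0_eq_top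
      (hTD.actsAsShift_dec0s0_left.congr_of_eq_bot_outside hbot fun i hi₀ hid => ?_) hB
      (fun i => ?_) (hr a)
    · rw [hθ _ (by omega) (by omega)]
      ring_nf
    · rw [mul_left_comm, ← zpow_natCast, ← zpow_add₀ hq0]
      ring_nf
  · rw [← qComm_inv]
    refine qComm_eq_smul_one_of_actsAsShift (inv_sub_inv_inv_ne_zero hq) hTD.iSup_dec0s0_eq_top
      (hTD.actsAsShift_dec0s0_right.congr_of_eq_bot_outside hbot hθ') hB
      (fun i => ?_) (hr a')
    rw [mul_left_comm, ← zpow_natCast, inv_zpow', ← zpow_add₀ hq0]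
    ring_nf

end IsTridiagonalPair

end Dec0s0

theorem stmt5_general {K : Type*} [Field K]
    {V : Type*} [AddCommGroup V] [Module K V]
    (q : K) (hq0 : q ≠ 0) (hq : ∀ n : ℕ, 0 < n → q ^ n ≠ 1)
    (A A' : Module.End K V) (d : ℕ) (Vs Vs' : ℤ → Submodule K V) (θ θ' : ℤ → K)
    (hTD : IsTridiagonalPair A A' d Vs Vs' θ θ')
    (a a' : K)
    (hθ : ∀ i : ℤ, 0 ≤ i → i ≤ (d : ℤ) → θ i = a * q ^ (2 * i - (d : ℤ)))
    (hθ' : ∀ i : ℤ, 0 ≤ i → i ≤ (d : ℤ) → θ' i = a' * q ^ ((d : ℤ) - 2 * i))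
    (b b' : K)
    (B : Module.End K V)
    (hB : ∀ i : ℤ, 0 ≤ i → i ≤ (d : ℤ) → ∀ v ∈ dec0s0 d Vs Vs' i,
      B v = (b * q ^ (2 * i - (d : ℤ))) • v)
    (B' : Module.End K V)
    (hB' : ∀ i : ℤ, 0 ≤ i → i ≤ (d : ℤ) → ∀ v ∈ decDsD d Vs Vs' i,
      B' v = (b' * q ^ ((d : ℤ) - 2 * i)) • v)
    :
    (q - q⁻¹)⁻¹ • (q • (A * B) - q⁻¹ • (B * A)) = (a * b) • (1 : Module.End K V) ∧
    (q - q⁻¹)⁻¹ • (q • (B * A') - q⁻¹ • (A' * B)) = (a' * b) • (1 : Module.End K V) ∧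
    (q - q⁻¹)⁻¹ • (q • (A' * B') - q⁻¹ • (B' * A')) = (a' * b') • (1 : Module.End K V) ∧
    (q - q⁻¹)⁻¹ • (q • (B' * A) - q⁻¹ • (A * B')) = (a * b') • (1 : Module.End K V) := by
  have hq' : q - q⁻¹ ≠ 0 := sub_inv_ne_zero_of_pow_ne_one hq0 hq
  obtain ⟨h₁, h₂⟩ := hTD.qComm_eq_smul_one_of_dec0s0 hq' hθ hθ' hB
  obtain ⟨h₄, h₃⟩ := hTD.reverse.qComm_eq_smul_one_of_dec0s0 (q := q⁻¹) (b := b') (B := B')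
    (inv_sub_inv_inv_ne_zero hq')
    (fun i hi₀ hid => by rw [hθ _ (by omega) (by omega), inv_zpow']; ring_nf)
    (fun i hi₀ hid => by rw [hθ' _ (by omega) (by omega), inv_zpow']; ring_nf)
    (fun i hi₀ hid v hv => by
      rw [hB' i hi₀ hid v (by rwa [decDsD_eq_dec0s0]), inv_zpow', neg_sub])
  rw [qComm_inv] at h₃ h₄
  exact ⟨h₁, h₂, h₃, h₄⟩

/-- the four relations involving `A, A*, B, B*`. -/
theorem stmt5 {K : Type*} [Field K] [IsAlgClosed K]
    {V : Type*} [AddCommGroup V] [Module K V] [FiniteDimensional K V] [Nontrivial V]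
    (q : K) (hq0 : q ≠ 0) (hq : ∀ n : ℕ, 0 < n → q ^ n ≠ 1)
    (A A' : Module.End K V) (d : ℕ) (Vs Vs' : ℤ → Submodule K V) (θ θ' : ℤ → K)
    (hTD : IsTridiagonalPair A A' d Vs Vs' θ θ')
    (a a' : K) (ha : a ≠ 0) (ha' : a' ≠ 0)
    (hθ : ∀ i : ℤ, 0 ≤ i → i ≤ (d : ℤ) → θ i = a * q ^ (2 * i - (d : ℤ)))
    (hθ' : ∀ i : ℤ, 0 ≤ i → i ≤ (d : ℤ) → θ' i = a' * q ^ ((d : ℤ) - 2 * i))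
    (b b' : K) (hb : b ≠ 0) (hb' : b' ≠ 0)
    (B : Module.End K V)
    (hB : ∀ i : ℤ, 0 ≤ i → i ≤ (d : ℤ) → ∀ v ∈ dec0s0 d Vs Vs' i,
      B v = (b * q ^ (2 * i - (d : ℤ))) • v)
    (B' : Module.End K V)
    (hB' : ∀ i : ℤ, 0 ≤ i → i ≤ (d : ℤ) → ∀ v ∈ decDsD d Vs Vs' i,
      B' v = (b' * q ^ ((d : ℤ) - 2 * i)) • v)
    (Kop : Module.End K V)
    (hKop : ∀ i : ℤ, 0 ≤ i → i ≤ (d : ℤ) → ∀ v ∈ dec0sD d Vs Vs' i,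
      Kop v = (q ^ (2 * i - (d : ℤ))) • v)
    (Ks : Module.End K V)
    (hKs : ∀ i : ℤ, 0 ≤ i → i ≤ (d : ℤ) → ∀ v ∈ decDs0 d Vs Vs' i,
      Ks v = (q ^ (2 * i - (d : ℤ))) • v)
    (Kinv Ksinv : Module.End K V)
    (hKinv1 : Kop * Kinv = 1) (hKinv2 : Kinv * Kop = 1)
    (hKsinv1 : Ks * Ksinv = 1) (hKsinv2 : Ksinv * Ks = 1)
    :
    (q - q⁻¹)⁻¹ • (q • (A * B) - q⁻¹ • (B * A)) = (a * b) • (1 : Module.End K V) ∧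
    (q - q⁻¹)⁻¹ • (q • (B * A') - q⁻¹ • (A' * B)) = (a' * b) • (1 : Module.End K V) ∧
    (q - q⁻¹)⁻¹ • (q • (A' * B') - q⁻¹ • (B' * A')) = (a' * b') • (1 : Module.End K V) ∧
    (q - q⁻¹)⁻¹ • (q • (B' * A) - q⁻¹ • (A * B')) = (a * b') • (1 : Module.End K V) :=
  stmt5_general q hq0 hq A A' d Vs Vs' θ θ' hTD a a' hθ hθ' b b' B hB B' hB'
end
end
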